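/- Let σ = (q,p,C) and σ̂ = (q̂,p̂,Ĉ) both satisfy the stated conditions, and let r, r̂ ∈ ℝ and u, û ∈ 𝓔. Then Φ_{(σ,r,u)} ∘ Φ_{(σ̂,r̂,û)} = Φ_{(σσ̂, r + q⁻¹·r̂ − Ω(u, σû), u + σû)}, where σσ̂ = (q·q̂, q·p̂ + p, C∘Ĉ), the triple σσ̂ again satisfies the stated conditions, and u + σû ∈ 𝓔. -/

import Mathlib

noncomputable section

variable {V : Type*} [NormedAddCommGroup V] [NormedSpace ℝ V]

/-- The space `𝓔` of (twice continuously differentiable) solutions of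
`u'(t) = f(t)·u(t) + A(u(t))` on `I`, extended by zero off `I`. -/
def solSpace (I : Set ℝ) (f : ℝ → ℝ) (A : V →ₗ[ℝ] V) : Submodule ℝ (ℝ → V) where
  carrier := {u | (∀ t ∉ I, u t = 0) ∧ ∃ u' : ℝ → V,
      (∀ t ∈ I, HasDerivAt u (u' t) t) ∧
      (∀ t ∈ I, HasDerivAt u' (f t • u t + A (u t)) t)}
  zero_mem' := by
    refine ⟨fun t _ => rfl, 0, fun t ht => ?_, fun t ht => ?_⟩
    · simpa using hasDerivAt_const t (0 : V)
    · simpa using hasDerivAt_const t (0 : V)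
  add_mem' := by
    rintro u v ⟨hu0, u', hu1, hu2⟩ ⟨hv0, v', hv1, hv2⟩
    refine ⟨fun t ht => by simp [hu0 t ht, hv0 t ht], u' + v', fun t ht => ?_, fun t ht => ?_⟩
    · simpa using (hu1 t ht).add (hv1 t ht)
    · have h := (hu2 t ht).add (hv2 t ht)
      have he : f t • (u + v) t + A ((u + v) t)
          = f t • u t + A (u t) + (f t • v t + A (v t)) := by
        simp [smul_add]
        abel
      rw [he]
      simpa using h
  smul_mem' := by
    rintro c u ⟨hu0, u', hu1, hu2⟩
    refine ⟨fun t ht => by simp [hu0 t ht], c • u', fun t ht => ?_, fun t ht => ?_⟩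
    · simpa using (hu1 t ht).const_smul c
    · have h := (hu2 t ht).const_smul c
      have he : f t • (c • u) t + A ((c • u) t) = c • (f t • u t + A (u t)) := by
        simp [smul_add, smul_smul, mul_comm]
      rw [he]
      simpa using h


/-- The action `(σu)(t) = C (u (q⁻¹(t − p)))` of a triple `σ = (q,p,C)`. -/
def sigmaAct (q p : ℝ) (C : V →ₗ[ℝ] V) (u : ℝ → V) : ℝ → V :=
  fun t => C (u (q⁻¹ * (t - p)))

/-- The "stated conditions" on a triple `σ = (q,p,C)`: `q > 0`, `C` is a linear isometry of
the form `g`, `C∘A∘C⁻¹ = q²·A` (written as `C∘A = q²·(A∘C)`), `t ↦ qt+p` maps `I`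
bijectively onto `I`, and `f(t) = q²·f(qt+p)` on `I`. -/
def SigmaCond (g : V →ₗ[ℝ] V →ₗ[ℝ] ℝ) (A : V →ₗ[ℝ] V) (I : Set ℝ) (f : ℝ → ℝ)
    (q p : ℝ) (C : V →ₗ[ℝ] V) : Prop :=
  0 < q ∧ (∀ v w : V, g (C v) (C w) = g v w) ∧ (C ∘ₗ A = q ^ 2 • (A ∘ₗ C)) ∧
    Set.BijOn (fun t => q * t + p) I I ∧ (∀ t ∈ I, f t = q ^ 2 * f (q * t + p))

/-- The map `Φ_{(σ,r,u)}(t,s,v) = (qt+p, −⟨u'(qt+p), 2Cv + u(qt+p)⟩ + q⁻¹s + r, Cv + u(qt+p))`. -/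
def Phi (g : V →ₗ[ℝ] V →ₗ[ℝ] ℝ) (q p r : ℝ) (C : V →ₗ[ℝ] V) (u : ℝ → V)
    (x : ℝ × ℝ × V) : ℝ × ℝ × V :=
  (q * x.1 + p,
   -(g (deriv u (q * x.1 + p)) ((2 : ℝ) • C x.2.2 + u (q * x.1 + p))) + q⁻¹ * x.2.1 + r,
   C x.2.2 + u (q * x.1 + p))

section Aux
variable [FiniteDimensional ℝ V]

def gCont (g : V →ₗ[ℝ] V →ₗ[ℝ] ℝ) : V →L[ℝ] V →L[ℝ] ℝ :=
  LinearMap.toContinuousLinearMap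
    ((LinearMap.toContinuousLinearMap :
        (V →ₗ[ℝ] ℝ) ≃ₗ[ℝ] (V →L[ℝ] ℝ)).toLinearMap ∘ₗ g)

@[simp] lemma gCont_apply (g : V →ₗ[ℝ] V →ₗ[ℝ] ℝ) (v w : V) : gCont g v w = g v w := rfl

lemma hasDerivAt_pairing (g : V →ₗ[ℝ] V →ₗ[ℝ] ℝ) {a b : ℝ → V} {a' b' : V} {t : ℝ}
    (ha : HasDerivAt a a' t) (hb : HasDerivAt b b' t) :
    HasDerivAt (fun s => g (a s) (b s)) (g a' (b t) + g (a t) b') t := by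
  have h1 : HasDerivAt (fun s => gCont g (a s)) (gCont g a') t :=
    (gCont g).hasFDerivAt.comp_hasDerivAt t ha
  simpa using h1.clm_apply hb

lemma wronskian_const (g : V →ₗ[ℝ] V →ₗ[ℝ] ℝ) (hg_symm : ∀ v w : V, g v w = g w v)
    (A : V →ₗ[ℝ] V) (hA : ∀ v w : V, g (A v) w = g v (A w))
    {I : Set ℝ} (hIopen : IsOpen I) (hIconn : I.OrdConnected)
    (f : ℝ → ℝ) {u w du dw : ℝ → V}
    (hu1 : ∀ t ∈ I, HasDerivAt u (du t) t)
    (hu2 : ∀ t ∈ I, HasDerivAt du (f t • u t + A (u t)) t)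
    (hw1 : ∀ t ∈ I, HasDerivAt w (dw t) t)
    (hw2 : ∀ t ∈ I, HasDerivAt dw (f t • w t + A (w t)) t)
    {t₀ t₁ : ℝ} (h₀ : t₀ ∈ I) (h₁ : t₁ ∈ I) :
    g (du t₀) (w t₀) - g (u t₀) (dw t₀) = g (du t₁) (w t₁) - g (u t₁) (dw t₁) := by
  set F : ℝ → ℝ := fun t => g (du t) (w t) - g (u t) (dw t) with hF
  have hFd : ∀ t ∈ I, HasDerivAt F 0 t := by
    intro t ht
    have h1 := hasDerivAt_pairing g (hu2 t ht) (hw1 t ht)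
    have h2 := hasDerivAt_pairing g (hu1 t ht) (hw2 t ht)
    have h3 := h1.sub h2
    have key : g (f t • u t + A (u t)) (w t) + g (du t) (dw t)
        - (g (du t) (dw t) + g (u t) (f t • w t + A (w t))) = 0 := by
      simp only [map_add, map_smul, LinearMap.add_apply, LinearMap.smul_apply,
        smul_eq_mul, hA (u t) (w t)]
      ring
    rw [key] at h3
    exact h3
  have hconv : Convex ℝ I := hIconn.convex
  have hdiff : DifferentiableOn ℝ F I := fun t ht =>
    ((hFd t ht).differentiableAt).differentiableWithinAt
  have hzero : ∀ t ∈ I, fderivWithin ℝ F I t = 0 := by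
    intro t ht
    have h0 : HasFDerivAt F (0 : ℝ →L[ℝ] ℝ) t := by
      have := (hFd t ht).hasFDerivAt
      convert this using 1
      ext y
      simp
      ext y
      simp
    exact h0.hasFDerivWithinAt.fderivWithin (hIopen.uniqueDiffWithinAt ht)
  exact hconv.is_const_of_fderivWithin_eq_zero hdiff hzero h₀ h₁



lemma sigmaAct_facts (g : V →ₗ[ℝ] V →ₗ[ℝ] ℝ) (A : V →ₗ[ℝ] V) {I : Set ℝ} {f : ℝ → ℝ}
    {q p : ℝ} {C : V →ₗ[ℝ] V} (hσ : SigmaCond g A I f q p C)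
    {u du : ℝ → V} (hu0 : ∀ t ∉ I, u t = 0)
    (hu1 : ∀ t ∈ I, HasDerivAt u (du t) t)
    (hu2 : ∀ t ∈ I, HasDerivAt du (f t • u t + A (u t)) t) :
    (∀ t ∉ I, sigmaAct q p C u t = 0) ∧
    (∀ t ∈ I, HasDerivAt (sigmaAct q p C u) (q⁻¹ • C (du (q⁻¹ * (t - p)))) t) ∧
    (∀ t ∈ I, HasDerivAt (fun x => q⁻¹ • C (du (q⁻¹ * (x - p))))
        (f t • sigmaAct q p C u t + A (sigmaAct q p C u t)) t) := by
  obtain ⟨hq, hCi, hCA, hbij, hfc⟩ := hσ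
  have hqne : q ≠ 0 := ne_of_gt hq
  have hmem : ∀ t ∈ I, q⁻¹ * (t - p) ∈ I := by
    intro t ht
    obtain ⟨x, hx, hxe⟩ := hbij.surjOn ht
    simp only at hxe
    have hx2 : q⁻¹ * (t - p) = x := by rw [← hxe]; field_simp; ring
    rwa [hx2]
  have hmem' : ∀ t, t ∉ I → q⁻¹ * (t - p) ∉ I := by
    intro t ht hmem2
    have h := hbij.mapsTo hmem2
    have harg : q * (q⁻¹ * (t - p)) + p = t := by field_simp; ring
    rw [harg] at h
    exact ht h
  have hι : ∀ t : ℝ, HasDerivAt (fun x => q⁻¹ * (x - p)) q⁻¹ t := by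
    intro t
    simpa using ((hasDerivAt_id t).sub_const p).const_mul q⁻¹
  set Cc := LinearMap.toContinuousLinearMap C with hCc
  refine ⟨?_, ?_, ?_⟩
  · intro t ht
    simp [sigmaAct, hu0 _ (hmem' t ht)]
  · intro t ht
    have h1 : HasDerivAt (fun x => u (q⁻¹ * (x - p))) (q⁻¹ • du (q⁻¹ * (t - p))) t :=
      (hu1 _ (hmem t ht)).scomp t (hι t)
    have h2 := Cc.hasFDerivAt.comp_hasDerivAt t h1
    unfold sigmaAct
    simpa [sigmaAct, map_smul, Function.comp_def, hCc] using h2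
  · intro t ht
    have hι2 := hmem t ht
    have h1 : HasDerivAt (fun x => du (q⁻¹ * (x - p)))
        (q⁻¹ • (f (q⁻¹ * (t - p)) • u (q⁻¹ * (t - p)) + A (u (q⁻¹ * (t - p))))) t :=
      (hu2 _ hι2).scomp t (hι t)
    have h2 := Cc.hasFDerivAt.comp_hasDerivAt t h1
    have h3 := h2.const_smul q⁻¹
    have h4 : HasDerivAt (fun x => q⁻¹ • C (du (q⁻¹ * (x - p))))
        (q⁻¹ • C (q⁻¹ • (f (q⁻¹ * (t - p)) • u (q⁻¹ * (t - p))
          + A (u (q⁻¹ * (t - p)))))) t := by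
      show HasDerivAt (q⁻¹ • fun x => C (du (q⁻¹ * (x - p)))) _ t
      simpa [Function.comp_def, hCc] using h3
    have harg : q * (q⁻¹ * (t - p)) + p = t := by field_simp; ring
    have hfι : f (q⁻¹ * (t - p)) = q ^ 2 * f t := by
      have h := hfc _ hι2
      rw [harg] at h
      exact h
    have hCAx : ∀ x : V, C (A x) = q ^ 2 • A (C x) := fun x => LinearMap.ext_iff.mp hCA x
    have hval : q⁻¹ • C (q⁻¹ • (f (q⁻¹ * (t - p)) • u (q⁻¹ * (t - p))
          + A (u (q⁻¹ * (t - p)))))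
        = f t • sigmaAct q p C u t + A (sigmaAct q p C u t) := by
      simp only [map_smul, map_add, hfι, hCAx, sigmaAct, smul_add, smul_smul]
      match_scalars <;> field_simp <;> ring
    rw [hval] at h4
    exact h4


end Aux

/-- The composition law `Φ_{(σ,r,u)} ∘ Φ_{(σ̂,r̂,û)} = Φ_{(σσ̂, r + q⁻¹r̂ − Ω(u,σû), u + σû)}`,
where `σσ̂ = (q·q̂, q·p̂ + p, C∘Ĉ)` again satisfies the stated conditions and `u + σû ∈ 𝓔`. -/
theorem stmt_6 {V : Type*} [NormedAddCommGroup V] [NormedSpace ℝ V] [FiniteDimensional ℝ V]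
    (g : V →ₗ[ℝ] V →ₗ[ℝ] ℝ) (hg_symm : ∀ v w : V, g v w = g w v)
    (hg_nondeg : ∀ v : V, (∀ w : V, g v w = 0) → v = 0)
    (A : V →ₗ[ℝ] V) (hA : ∀ v w : V, g (A v) w = g v (A w))
    (I : Set ℝ) (hIopen : IsOpen I) (hIne : I.Nonempty) (hIconn : I.OrdConnected)
    (f : ℝ → ℝ) (hf : ContDiffOn ℝ (⊤ : ℕ∞) f I)
    (q p q' p' : ℝ) (C C' : V →ₗ[ℝ] V)
    (hσ : SigmaCond g A I f q p C) (hσ' : SigmaCond g A I f q' p' C')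
    (r r' : ℝ) (u u' : ℝ → V) (hu : u ∈ solSpace I f A) (hu' : u' ∈ solSpace I f A)
    (t₀ : ℝ) (ht₀ : t₀ ∈ I) :
    SigmaCond g A I f (q * q') (q * p' + p) (C ∘ₗ C') ∧
    u + sigmaAct q p C u' ∈ solSpace I f A ∧
    (∀ t ∈ I, ∀ (s : ℝ) (v : V),
      Phi g q p r C u (Phi g q' p' r' C' u' (t, s, v))
        = Phi g (q * q') (q * p' + p)
            (r + q⁻¹ * r'
              - (g (deriv u t₀) (sigmaAct q p C u' t₀)
                  - g (u t₀) (deriv (sigmaAct q p C u') t₀)))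
            (C ∘ₗ C') (u + sigmaAct q p C u') (t, s, v)) := by
  obtain ⟨hu0, du, hdu1, hdu2⟩ := hu
  obtain ⟨hu'0, du', hdu'1, hdu'2⟩ := hu'
  obtain ⟨hσ0, hσ1, hσ2⟩ := sigmaAct_facts g A hσ hu'0 hdu'1 hdu'2
  obtain ⟨hq, hCi, hCA, hbij, hfc⟩ := hσ
  obtain ⟨hq', hCi', hCA', hbij', hfc'⟩ := hσ'
  have hqne : q ≠ 0 := ne_of_gt hq
  have hq'ne : q' ≠ 0 := ne_of_gt hq'
  have hσmem : sigmaAct q p C u' ∈ solSpace I f A := ⟨hσ0, _, hσ1, hσ2⟩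
  refine ⟨⟨mul_pos hq hq', fun v w => by simp [LinearMap.comp_apply, hCi, hCi'], ?_, ?_, ?_⟩,
    Submodule.add_mem _ ⟨hu0, du, hdu1, hdu2⟩ hσmem, ?_⟩
  · ext x
    have h1 : C' (A x) = q' ^ 2 • A (C' x) := LinearMap.ext_iff.mp hCA' x
    have h2 : C (A (C' x)) = q ^ 2 • A (C (C' x)) := LinearMap.ext_iff.mp hCA (C' x)
    simp only [LinearMap.comp_apply, LinearMap.smul_apply]
    rw [h1, map_smul, h2, smul_smul]
    rw [show q' ^ 2 * q ^ 2 = (q * q') ^ 2 by ring]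
  · have hcomp := hbij.comp hbij'
    refine hcomp.congr fun x _ => ?_
    simp only [Function.comp]
    ring
  · intro t ht
    have h1 := hfc' t ht
    have h2 := hfc _ (hbij'.mapsTo ht)
    have harg : q * (q' * t + p') + p = q * q' * t + (q * p' + p) := by ring
    rw [h1, h2, harg]
    ring
  · intro t ht s v
    set T₁ : ℝ := q' * t + p' with hT₁def
    have hT₁ : T₁ ∈ I := hbij'.mapsTo ht
    set T : ℝ := q * T₁ + p with hTdef
    have hT : T ∈ I := hbij.mapsTo hT₁
    have hTT : q * q' * t + (q * p' + p) = T := by rw [hTdef, hT₁def]; ring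
    have hargT : q⁻¹ * (T - p) = T₁ := by rw [hTdef]; field_simp; ring
    have hσT : sigmaAct q p C u' T = C (u' T₁) := by rw [sigmaAct, hargT]
    have hsum : HasDerivAt (u + sigmaAct q p C u') (du T + q⁻¹ • C (du' T₁)) T := by
      have h := (hdu1 T hT).add (hσ1 T hT)
      rw [hargT] at h
      exact h
    have hW : g (du t₀) (sigmaAct q p C u' t₀)
          - g (u t₀) (q⁻¹ • C (du' (q⁻¹ * (t₀ - p))))
        = g (du T) (C (u' T₁)) - g (u T) (q⁻¹ • C (du' T₁)) := by
      have h := wronskian_const g hg_symm A hA hIopen hIconn f hdu1 hdu2 hσ1 hσ2 ht₀ hT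
      rw [hargT, hσT] at h
      exact h
    simp only [Phi, Prod.mk.injEq, LinearMap.comp_apply, Pi.add_apply]
    rw [hTT]
    refine ⟨rfl, ?_, ?_⟩
    · rw [(hdu1 T hT).deriv, (hdu'1 T₁ hT₁).deriv, hsum.deriv,
        (hdu1 t₀ ht₀).deriv, (hσ1 t₀ ht₀).deriv, hW, hσT]
      simp only [map_add, map_smul, LinearMap.add_apply, LinearMap.smul_apply, smul_eq_mul]
      rw [hCi (du' T₁) (C' v), hCi (du' T₁) (u' T₁), hg_symm (C (du' T₁)) (u T)]
      ring
    · rw [hσT, map_add]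
      abel
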